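/- Let X be a finite T0 topological space that has path-shaped Hasse diagram, and let Y and Z be nonempty connected locally closed subsets of X. Then the intersection Y ∩ Z is preconnected (i.e. it is connected whenever it is nonempty). -/

import Mathlib

/-! Index the points along the path by `e.symm`. Covers join neighbouring indices, so a maximal
chain from `x` to `y` visits every index between those of `x` and `y`: each such point lies in
the order interval `[x, y]`. Hence a preconnected locally closed set `Y` is convex for the index:
if it missed a point `z` between two of its points, no point of `Y` of smaller index
than `z` would be comparable with one of larger index (`z` would lie between them in the order,
hence in `Y`), and in a finite space the up-closures of these two parts would disconnect `Y`.
So `Y ∩ Z` is an index interval, which is preconnected because consecutive points are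
comparable. -/

/-- The specialisation order of a topological space: `x ⪯ y` iff `x ∈ closure {y}`. -/
def specLE {X : Type*} [TopologicalSpace X] (x y : X) : Prop := x ∈ closure ({y} : Set X)

/-- Strict specialisation: `x ≺ y`. -/
def specLT {X : Type*} [TopologicalSpace X] (x y : X) : Prop := specLE x y ∧ x ≠ y

/-- The covering relation of the specialisation order: `x ⋖ y`. -/
def specCov {X : Type*} [TopologicalSpace X] (x y : X) : Prop :=
  specLT x y ∧ ¬ ∃ z, specLT x z ∧ specLT z y

open Set Function Specialization

lemma mem_uIcc_of_covBy_or_covBy {β : Type*} [LinearOrder β] {a b c k : β} (hk : k ∈ uIcc a b)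
    (hk_ne : k ≠ a) (hac : a ⋖ c ∨ c ⋖ a) : k ∈ uIcc c b := by
  rw [mem_uIcc] at hk ⊢
  rcases hac with hac | hac <;> rcases hk with ⟨hak, hkb⟩ | ⟨hbk, hka⟩
  · exact Or.inl ⟨hac.ge_of_gt (hak.lt_of_ne' hk_ne), hkb⟩
  · exact Or.inr ⟨hbk, hka.trans hac.le⟩
  · exact Or.inl ⟨hac.le.trans hak, hkb⟩
  · exact Or.inr ⟨hbk, hac.le_of_lt (hka.lt_of_ne hk_ne)⟩

theorem exists_mem_Icc_apply_eq_of_covBy {α β : Type*} [PartialOrder α] [WellFoundedGT α]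
    [IsStronglyAtomic α] [LinearOrder β] {f : α → β} (hf : ∀ a b, a ⋖ b → f a ⋖ f b ∨ f b ⋖ f a)
    {x y : α} (hxy : x ≤ y) {k : β} (hk : k ∈ uIcc (f x) (f y)) : ∃ z ∈ Icc x y, f z = k := by
  induction x using WellFoundedGT.induction with
  | _ x ih =>
    by_cases hkx : k = f x
    · exact ⟨x, ⟨le_rfl, hxy⟩, hkx.symm⟩
    obtain rfl | hlt := hxy.eq_or_lt
    · rw [uIcc_self] at hk
      exact absurd hk hkx
    obtain ⟨c, hxc, hcy⟩ := exists_covBy_le_of_lt hlt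
    obtain ⟨z, hz, rfl⟩ := ih c hxc.lt hcy (mem_uIcc_of_covBy_or_covBy hk hkx (hf x c hxc))
    exact ⟨z, ⟨hxc.le.trans hz.1, hz.2⟩, rfl⟩

section Topology
variable {X : Type*} [TopologicalSpace X]

lemma specLE_iff_specializes {x y : X} : specLE x y ↔ y ⤳ x :=
  specializes_iff_mem_closure.symm

lemma specLT_iff_lt [T0Space X] {x y : X} : specLT x y ↔ toEquiv x < toEquiv y := by
  rw [lt_iff_le_and_ne, specLT, specLE_iff_specializes, toEquiv_le_toEquiv]
  rfl

lemma specCov_iff_covBy [T0Space X] {x y : X} : specCov x y ↔ toEquiv x ⋖ toEquiv y := by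
  simp only [specCov, specLT_iff_lt, not_exists, not_and]
  rfl

instance [Finite X] : Finite (Specialization X) := Finite.of_equiv X toEquiv

lemma IsLocallyClosed.mem_of_specializes {Y : Set X} (hY : IsLocallyClosed Y) {a b z : X}
    (ha : a ∈ Y) (hb : b ∈ Y) (hza : z ⤳ a) (hbz : b ⤳ z) : z ∈ Y := by
  obtain ⟨U, C, hU, hC, rfl⟩ := hY
  exact ⟨hza.mem_open hU ha.1, hbz.mem_closed hC hb.2⟩

lemma isPreconnected_pair_of_specializes {x y : X} (h : x ⤳ y) : IsPreconnected ({x, y} : Set X) :=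
  isPreconnected_singleton.subset_closure (singleton_subset_iff.2 (mem_insert x _))
    (insert_subset (subset_closure rfl) (singleton_subset_iff.2 (specializes_iff_mem_closure.1 h)))

lemma IsPreconnected.insert_of_specializes {s : Set X} (hs : IsPreconnected s) {x y : X}
    (hy : y ∈ s) (h : x ⤳ y ∨ y ⤳ x) : IsPreconnected (insert x s) := by
  have hxy : IsPreconnected ({x, y} : Set X) := by
    rcases h with h | h
    · exact isPreconnected_pair_of_specializes h
    · exact pair_comm y x ▸ isPreconnected_pair_of_specializes h
  simpa [insert_union, hy] using hxy.union y (by simp) hy hs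

theorem isPreconnected_image_Icc_of_covBy {β : Type*} [LinearOrder β] [SuccOrder β]
    [IsSuccArchimedean β] {g : β → X} (hg : ∀ i j, i ⋖ j → g i ⤳ g j ∨ g j ⤳ g i) (a b : β) :
    IsPreconnected (g '' Icc a b) := by
  rcases lt_or_ge b a with hba | hab
  · simp [Icc_eq_empty_of_lt hba, isPreconnected_empty]
  refine Succ.rec (by simpa using isPreconnected_singleton) (fun b hab ih => ?_) hab
  by_cases hb : IsMax b
  · rwa [hb.succ_eq]
  rw [Order.Icc_succ_right (hab.trans (Order.le_succ b)), image_insert_eq]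
  exact ih.insert_of_specializes (mem_image_of_mem g ⟨hab, le_rfl⟩)
    ((hg b _ (Order.covBy_succ_of_not_isMax hb)).symm)

theorem IsPreconnected.exists_specializes_of_subset_union [AlexandrovDiscrete X] {Y A B : Set X}
    (hY : IsPreconnected Y) (hYAB : Y ⊆ A ∪ B) (hA : (Y ∩ A).Nonempty) (hB : (Y ∩ B).Nonempty) :
    ∃ a ∈ Y ∩ A, ∃ b ∈ Y ∩ B, a ⤳ b ∨ b ⤳ a := by
  obtain ⟨s, hsY, hsA, hsB⟩ := hY (nhdsKer (Y ∩ A)) (nhdsKer (Y ∩ B)) isOpen_nhdsKer isOpen_nhdsKer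
    (fun y hy => (hYAB hy).imp (fun h => subset_nhdsKer ⟨hy, h⟩) (fun h => subset_nhdsKer ⟨hy, h⟩))
    (hA.mono fun y hy => ⟨hy.1, subset_nhdsKer hy⟩) (hB.mono fun y hy => ⟨hy.1, subset_nhdsKer hy⟩)
  obtain ⟨a, ha, hsa⟩ := mem_nhdsKer_iff_specializes.1 hsA
  obtain ⟨b, hb, hsb⟩ := mem_nhdsKer_iff_specializes.1 hsB
  rcases hYAB hsY with hs | hs
  · exact ⟨s, ⟨hsY, hs⟩, b, hb, Or.inl hsb⟩
  · exact ⟨a, ha, s, ⟨hsY, hs⟩, Or.inr hsa⟩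

theorem IsPreconnected.mem_of_apply_mem_uIcc [Finite X] [T0Space X] {β : Type*} [LinearOrder β]
    {f : X → β} (hf_inj : Injective f)
    (hf : ∀ a b : X, toEquiv a ⋖ toEquiv b → f a ⋖ f b ∨ f b ⋖ f a)
    {Y : Set X} (hY : IsPreconnected Y) (hYlc : IsLocallyClosed Y) {x y z : X}
    (hx : x ∈ Y) (hy : y ∈ Y) (hz : f z ∈ uIcc (f x) (f y)) : z ∈ Y := by
  by_contra hzY
  have hne : ∀ w ∈ Y, f w ≠ f z := fun w hw h => hzY (hf_inj h ▸ hw)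
  have hbracket : ∀ a ∈ Y, ∀ b ∈ Y, a ⤳ b → f z ∈ uIcc (f b) (f a) → False := by
    intro a ha b hb hab hzab
    obtain ⟨w, hw, hwz⟩ := exists_mem_Icc_apply_eq_of_covBy (f := f ∘ ofEquiv)
      (fun a b h => hf _ _ h) (toEquiv_le_toEquiv.2 hab) hzab
    obtain rfl : ofEquiv w = z := hf_inj hwz
    exact hzY (hYlc.mem_of_specializes hb ha hw.1 hw.2)
  obtain ⟨hA, hB⟩ : (Y ∩ {w | f w < f z}).Nonempty ∧ (Y ∩ {w | f z < f w}).Nonempty := by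
    rcases mem_uIcc.1 hz with ⟨hxz, hzy⟩ | ⟨hyz, hzx⟩
    · exact ⟨⟨x, hx, hxz.lt_of_ne (hne x hx)⟩, ⟨y, hy, hzy.lt_of_ne (hne y hy).symm⟩⟩
    · exact ⟨⟨y, hy, hyz.lt_of_ne (hne y hy)⟩, ⟨x, hx, hzx.lt_of_ne (hne x hx).symm⟩⟩
  obtain ⟨a, ⟨ha, haz : f a < f z⟩, b, ⟨hb, hzb : f z < f b⟩, hab | hba⟩ :=
    hY.exists_specializes_of_subset_union (fun w hw => (hne w hw).lt_or_gt) hA hB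
  · exact hbracket a ha b hb hab (mem_uIcc.2 (Or.inr ⟨haz.le, hzb.le⟩))
  · exact hbracket b hb a ha hba (mem_uIcc.2 (Or.inl ⟨haz.le, hzb.le⟩))

end Topology

/-- In a finite T0-space with path-shaped Hasse diagram, the intersection of two nonempty
connected locally closed subsets is preconnected. -/
theorem stmt14 {X : Type*} [TopologicalSpace X] [Finite X] [T0Space X] (n : ℕ)
    (hpath : ∃ e : Fin n ≃ X, ∀ i j : Fin n,
      (specCov (e i) (e j) ∨ specCov (e j) (e i)) ↔ (i.val + 1 = j.val ∨ j.val + 1 = i.val))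
    (Y Z : Set X) (hY : IsConnected Y) (hYlc : IsLocallyClosed Y)
    (hZ : IsConnected Z) (hZlc : IsLocallyClosed Z) :
    IsPreconnected (Y ∩ Z) := by
  obtain ⟨e, he⟩ := hpath
  have hcov : ∀ i j : Fin n, (toEquiv (e i) ⋖ toEquiv (e j) ∨ toEquiv (e j) ⋖ toEquiv (e i)) ↔
      (i ⋖ j ∨ j ⋖ i) := by
    simpa [specCov_iff_covBy] using he
  have hconvex : ∀ W : Set X, IsPreconnected W → IsLocallyClosed W → ∀ x ∈ W, ∀ y ∈ W,
      e '' uIcc (e.symm x) (e.symm y) ⊆ W := by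
    rintro W hW hWlc x hx y hy _ ⟨k, hk, rfl⟩
    refine hW.mem_of_apply_mem_uIcc e.symm.injective (fun a b h => ?_) hWlc hx hy
      (by simpa using hk)
    simpa using (hcov (e.symm a) (e.symm b)).1 (by simpa using Or.inl h)
  refine isPreconnected_of_forall_pair fun x hx y hy => ⟨e '' uIcc (e.symm x) (e.symm y),
    subset_inter (hconvex Y hY.isPreconnected hYlc x hx.1 y hy.1)
      (hconvex Z hZ.isPreconnected hZlc x hx.2 y hy.2),
    ⟨_, left_mem_uIcc, e.apply_symm_apply x⟩, ⟨_, right_mem_uIcc, e.apply_symm_apply y⟩,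
    isPreconnected_image_Icc_of_covBy (fun i j h => ?_) _ _⟩
  simpa [or_comm] using ((hcov i j).2 (Or.inl h)).imp CovBy.le CovBy.le
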